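/- Let α, γ, C, K > 0 with KC > γ. Let v : (0,∞) → [0,∞) be nonincreasing, suppose that ∫_x^∞ t^{−γ/α−1} v(t) dt < ∞ for every x > 0, and suppose that v(x) ≤ (KC/α)·x^{γ/α}·∫_x^∞ t^{−γ/α−1} v(t) dt for all x ∈ (0, α]. Then there exists a constant C' > 0 such that v(x) ≤ C'·x^{(γ−CK)/α} for all x ∈ (0, α]. -/

import Mathlib

/-!
Write `F(x) = ∫_x^∞ t^{-γ/α-1} v(t) dt` and `δ = KC/α`. The hypothesis says
`t^{-γ/α-1} v(t) ≤ δ F(t)/t`, so `F(x) ≤ F(α) + δ ∫_x^α F(t)/t dt` on `(0, α]`. Since `F` is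
continuous, the backward Gronwall argument applies: `y ↦ y^δ (F(α) + δ ∫_y^α F(t)/t dt)` has
nonnegative derivative, whence `x^δ F(x) ≤ α^δ F(α)`. Substituting back into the hypothesis gives
`v(x) ≤ δ α^δ F(α) x^{γ/α - δ}`.
-/

open MeasureTheory Set

theorem rpow_neg_sub_one_mul_le {t p δ y I : ℝ} (ht : 0 < t) (h : y ≤ δ * t ^ p * I) :
    t ^ (-p - 1) * y ≤ δ * I / t := by
  calc t ^ (-p - 1) * y ≤ t ^ (-p - 1) * (δ * t ^ p * I) :=
        mul_le_mul_of_nonneg_left h (Real.rpow_nonneg ht.le _)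
    _ = δ * I * t ^ (-p - 1 + p) := by rw [Real.rpow_add ht]; ring
    _ = δ * I / t := by rw [show -p - 1 + p = -1 by ring, Real.rpow_neg_one, div_eq_mul_inv]

theorem rpow_mul_le_of_le_add_integral_div {u : ℝ → ℝ} {a b c δ : ℝ} (hδ : 0 ≤ δ)
    (ha : 0 < a) (hab : a ≤ b) (hu : ContinuousOn u (Icc a b))
    (hle : ∀ x ∈ Icc a b, u x ≤ c + δ * ∫ t in x..b, u t / t) :
    a ^ δ * u a ≤ b ^ δ * c := by
  set H : ℝ → ℝ := fun y => ∫ t in y..b, u t / t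
  have hpos : ∀ y ∈ Icc a b, 0 < y := fun y hy => ha.trans_le hy.1
  have hquot : ContinuousOn (fun t => u t / t) (Icc a b) :=
    hu.div continuousOn_id fun t ht => (hpos t ht).ne'
  have hH : ContinuousOn H (Icc a b) := by
    simpa only [uIcc_of_le hab] using
      intervalIntegral.continuousOn_primitive_interval_left (hquot.integrableOn_Icc.mono_set
        (uIcc_of_le hab).subset)
  have hH' : ∀ y ∈ Ioo a b, HasDerivAt H (-(u y / y)) y := by
    intro y hy
    refine intervalIntegral.integral_hasDerivAt_left ?_ ?_ ?_
    · exact (hquot.mono (Icc_subset_Icc hy.1.le le_rfl)).intervalIntegrable_of_Icc hy.2.le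
    · exact (hquot.mono Ioo_subset_Icc_self).stronglyMeasurableAtFilter isOpen_Ioo y hy
    · exact hquot.continuousAt (Icc_mem_nhds hy.1 hy.2)
  have hmono : MonotoneOn (fun y => y ^ δ * (c + δ * H y)) (Icc a b) := by
    refine monotoneOn_of_hasDerivWithinAt_nonneg (convex_Icc a b)
      (f' := fun y => δ * y ^ (δ - 1) * (c + δ * H y - u y)) ?_ ?_ ?_
    · exact (continuousOn_id.rpow_const fun y hy => Or.inl (hpos y hy).ne').mul
        (continuousOn_const.add (continuousOn_const.mul hH))
    · rw [interior_Icc]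
      intro y hy
      have hy0 : y ≠ 0 := (ha.trans hy.1).ne'
      refine (((Real.hasDerivAt_rpow_const (Or.inl hy0)).mul
        (((hH' y hy).const_mul δ).const_add c)).congr_deriv ?_).hasDerivWithinAt
      rw [Real.rpow_sub_one hy0]
      field_simp
      ring
    · rw [interior_Icc]
      intro y hy
      exact mul_nonneg (mul_nonneg hδ (Real.rpow_nonneg (ha.trans hy.1).le _))
        (sub_nonneg.2 (hle y (Ioo_subset_Icc_self hy)))
  calc a ^ δ * u a ≤ a ^ δ * (c + δ * H a) :=
        mul_le_mul_of_nonneg_left (hle a (left_mem_Icc.2 hab)) (Real.rpow_nonneg ha.le δ)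
    _ ≤ b ^ δ * (c + δ * H b) :=
        hmono (left_mem_Icc.2 hab) (right_mem_Icc.2 hab) hab
    _ = b ^ δ * c := by simp [H]

theorem rpow_mul_setIntegral_Ioi_le {f : ℝ → ℝ} {a b δ : ℝ} (hδ : 0 ≤ δ) (ha : 0 < a)
    (hab : a ≤ b) (hf : IntegrableOn f (Ioi a))
    (hle : ∀ t ∈ Icc a b, f t ≤ δ * (∫ s in Ioi t, f s) / t) :
    a ^ δ * ∫ t in Ioi a, f t ≤ b ^ δ * ∫ t in Ioi b, f t := by
  have hF : ContinuousOn (fun y => ∫ t in Ioi y, f t) (Icc a b) :=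
    hf.continuousOn_Ici_primitive_Ioi.mono Icc_subset_Ici_self
  refine rpow_mul_le_of_le_add_integral_div hδ ha hab hF fun x hx => ?_
  have hfx : IntegrableOn f (Ioi x) := hf.mono_set (Ioi_subset_Ioi hx.1)
  have hquot : IntervalIntegrable (fun t => δ * (∫ s in Ioi t, f s) / t) volume x b :=
    ((continuousOn_const.mul (hF.mono (Icc_subset_Icc hx.1 le_rfl))).div continuousOn_id
      fun t ht => (ha.trans_le (hx.1.trans ht.1)).ne').intervalIntegrable_of_Icc hx.2
  calc ∫ t in Ioi x, f t = (∫ t in x..b, f t) + ∫ t in Ioi b, f t :=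
        (intervalIntegral.integral_interval_add_Ioi hfx (hf.mono_set (Ioi_subset_Ioi hab))).symm
    _ ≤ (∫ t in x..b, δ * (∫ s in Ioi t, f s) / t) + ∫ t in Ioi b, f t := by
        gcongr
        exact intervalIntegral.integral_mono_on hx.2
          ((intervalIntegrable_iff_integrableOn_Ioc_of_le hx.2).2
            (hfx.mono_set Ioc_subset_Ioi_self)) hquot
          fun t ht => hle t ⟨hx.1.trans ht.1, ht.2⟩
    _ = (∫ t in Ioi b, f t) + δ * ∫ t in x..b, (∫ s in Ioi t, f s) / t := by
        simp only [mul_div_assoc, intervalIntegral.integral_const_mul]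
        ring

theorem gronwall_type_bound_general (α γ C K : ℝ)
    (hα : 0 < α) (hC : 0 < C) (hK : 0 < K)
    (v : ℝ → ℝ)
    (hv_int : ∀ x ∈ Set.Ioi (0 : ℝ),
      IntegrableOn (fun t => t ^ (-(γ / α) - 1) * v t) (Set.Ioi x))
    (hineq : ∀ x ∈ Set.Ioc (0 : ℝ) α,
      v x ≤ (K * C / α) * x ^ (γ / α) *
        ∫ t in Set.Ioi x, t ^ (-(γ / α) - 1) * v t) :
    ∃ C' : ℝ, 0 < C' ∧ ∀ x ∈ Set.Ioc (0 : ℝ) α,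
      v x ≤ C' * x ^ ((γ - C * K) / α) := by
  set δ := K * C / α
  set F : ℝ → ℝ := fun y => ∫ t in Ioi y, t ^ (-(γ / α) - 1) * v t
  refine ⟨max (δ * α ^ δ * F α) 1, lt_max_of_lt_right one_pos, fun x hx => ?_⟩
  have hx0 : 0 < x := hx.1
  have hδ : 0 ≤ δ := by positivity
  have hgronwall : x ^ δ * F x ≤ α ^ δ * F α :=
    rpow_mul_setIntegral_Ioi_le hδ hx0 hx.2 (hv_int x hx0) fun t ht =>
      rpow_neg_sub_one_mul_le (hx0.trans_le ht.1) (hineq t ⟨hx0.trans_le ht.1, ht.2⟩)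
  have hexp : x ^ (γ / α) = x ^ ((γ - C * K) / α) * x ^ δ := by
    rw [← Real.rpow_add hx0]
    congr 1
    simp only [δ]
    field_simp
    ring
  calc v x ≤ δ * x ^ (γ / α) * F x := hineq x hx
    _ = δ * x ^ ((γ - C * K) / α) * (x ^ δ * F x) := by rw [hexp]; ring
    _ ≤ δ * x ^ ((γ - C * K) / α) * (α ^ δ * F α) :=
        mul_le_mul_of_nonneg_left hgronwall (by positivity)
    _ = δ * α ^ δ * F α * x ^ ((γ - C * K) / α) := by ring
    _ ≤ max (δ * α ^ δ * F α) 1 * x ^ ((γ - C * K) / α) :=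
        mul_le_mul_of_nonneg_right (le_max_left _ _) (by positivity)

/-- A Gronwall-type estimate: if `v : (0,∞) → [0,∞)` is
nonincreasing, `t^{−γ/α−1}·v(t)` is integrable on `(x,∞)` for every `x > 0`,
and `v(x) ≤ (KC/α)·x^{γ/α}·∫_x^∞ t^{−γ/α−1} v(t) dt` for all `x ∈ (0,α]`,
then `v(x) ≤ C'·x^{(γ−CK)/α}` on `(0,α]` for some constant `C' > 0`. -/
theorem gronwall_type_bound (α γ C K : ℝ)
    (hα : 0 < α) (hγ : 0 < γ) (hC : 0 < C) (hK : 0 < K) (hKC : γ < K * C)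
    (v : ℝ → ℝ)
    (hv_nonneg : ∀ x ∈ Set.Ioi (0 : ℝ), 0 ≤ v x)
    (hv_mono : AntitoneOn v (Set.Ioi (0 : ℝ)))
    (hv_int : ∀ x ∈ Set.Ioi (0 : ℝ),
      IntegrableOn (fun t => t ^ (-(γ / α) - 1) * v t) (Set.Ioi x))
    (hineq : ∀ x ∈ Set.Ioc (0 : ℝ) α,
      v x ≤ (K * C / α) * x ^ (γ / α) *
        ∫ t in Set.Ioi x, t ^ (-(γ / α) - 1) * v t) :
    ∃ C' : ℝ, 0 < C' ∧ ∀ x ∈ Set.Ioc (0 : ℝ) α,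
      v x ≤ C' * x ^ ((γ - C * K) / α) :=
  gronwall_type_bound_general α γ C K hα hC hK v hv_int hineq
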